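/- arXiv:1403.5171 — 3 statements merged into one kernel-verified Lean document; each statement's English description precedes it below -/
import Mathlib

section
/- Let (G,w) be a finite weighted graph with positive real edge weights, let h ≥ 1 be an integer, and let ε > 0 and D' > 0 be reals. Define rounded edge weights by w'(e) = ⌈2h·w(e)/(ε·D')⌉ for every edge e of G. If u and v are vertices with dist^h_{G,w}(u,v) ≤ D', then dist_{G,w'}(u,v) ≤ (1 + 2/ε)·h. -/
/- Rounding up adds less than one to each edge, so a walk with at most `h` edges and `w`-weight
at most `D'` has `w'`-weight at most `(2h / (ε D')) · D' + h = (1 + 2/ε) h`. -/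

open SimpleGraph
open scoped ENNReal

noncomputable section

/-- The weight of a walk: the sum of the weights of its edges (with multiplicity). -/
def walkWeight {V : Type*} {G : SimpleGraph V} (w : Sym2 V → ℝ) {u v : V}
    (p : G.Walk u v) : ℝ :=
  (p.edges.map w).sum

/-- The distance between `u` and `v`: the minimum weight of a `u`–`v` walk (`∞` if none). -/
def wdist {V : Type*} (G : SimpleGraph V) (w : Sym2 V → ℝ) (u v : V) : ℝ≥0∞ :=
  ⨅ p : G.Walk u v, ENNReal.ofReal (walkWeight w p)

/-- The `h`-hop distance between `u` and `v`: the minimum weight of a `u`–`v` walk with at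
most `h` edges (`∞` if none). -/
def hopDist {V : Type*} (G : SimpleGraph V) (w : Sym2 V → ℝ) (h : ℕ) (u v : V) : ℝ≥0∞ :=
  ⨅ p : {p : G.Walk u v // p.length ≤ h}, ENNReal.ofReal (walkWeight w p.1)

theorem walkWeight_le_mul_add_length {V : Type*} {G : SimpleGraph V} {w w' : Sym2 V → ℝ}
    {c : ℝ} {u v : V} (p : G.Walk u v) (hw' : ∀ e ∈ p.edges, w' e ≤ c * w e + 1) :
    walkWeight w' p ≤ c * walkWeight w p + p.length := by
  calc walkWeight w' p ≤ (p.edges.map fun e => c * w e + 1).sum :=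
        List.sum_le_sum hw'
    _ = c * walkWeight w p + p.length := by
        simp [walkWeight, List.sum_map_add, List.sum_map_mul_left]

theorem wdist_le_walkWeight {V : Type*} {G : SimpleGraph V} (w : Sym2 V → ℝ) {u v : V}
    (p : G.Walk u v) : wdist G w u v ≤ ENNReal.ofReal (walkWeight w p) :=
  iInf_le _ p

theorem wdist_le_mul_hopDist_add {V : Type*} {G : SimpleGraph V} {w w' : Sym2 V → ℝ} {c : ℝ}
    (hc : 0 ≤ c) (hw' : ∀ e ∈ G.edgeSet, w' e ≤ c * w e + 1) (h : ℕ) {u v : V}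
    (hfin : hopDist G w h u v ≠ ∞) :
    wdist G w' u v ≤ ENNReal.ofReal c * hopDist G w h u v + h := by
  have : Nonempty {p : G.Walk u v // p.length ≤ h} := by
    by_contra hempty
    rw [not_nonempty_iff] at hempty
    exact hfin (iInf_of_empty _)
  rw [hopDist, ENNReal.mul_iInf (by simp), ENNReal.iInf_add]
  refine le_iInf fun ⟨p, hp⟩ => ?_
  have hlen : walkWeight w' p ≤ c * walkWeight w p + h := by
    have := walkWeight_le_mul_add_length p fun e he => hw' e (p.edges_subset_edgeSet he)
    have : (p.length : ℝ) ≤ h := by exact_mod_cast hp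
    linarith
  calc wdist G w' u v ≤ ENNReal.ofReal (walkWeight w' p) := wdist_le_walkWeight w' p
    _ ≤ ENNReal.ofReal (c * walkWeight w p + h) := ENNReal.ofReal_le_ofReal hlen
    _ ≤ ENNReal.ofReal (c * walkWeight w p) + ENNReal.ofReal h := ENNReal.ofReal_add_le
    _ = ENNReal.ofReal c * ENNReal.ofReal (walkWeight w p) + h := by
        rw [ENNReal.ofReal_mul hc, ENNReal.ofReal_natCast]

theorem stmt_3_general {V : Type*} (G : SimpleGraph V) (w : Sym2 V → ℝ)
    (h : ℕ) (ε D' : ℝ) (hε : 0 < ε) (hD' : 0 < D')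
    (w' : Sym2 V → ℝ)
    (hw' : ∀ e ∈ G.edgeSet, w' e = ((⌈2 * (h : ℝ) * w e / (ε * D')⌉ : ℤ) : ℝ))
    (u v : V) (hle : hopDist G w h u v ≤ ENNReal.ofReal D') :
    wdist G w' u v ≤ ENNReal.ofReal ((1 + 2 / ε) * h) := by
  set c : ℝ := 2 * h / (ε * D') with hc_def
  have hc : 0 ≤ c := by positivity
  have hround : ∀ e ∈ G.edgeSet, w' e ≤ c * w e + 1 := fun e he => by
    rw [hw' e he, mul_div_right_comm]
    exact (Int.ceil_lt_add_one _).le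
  have hcD' : c * D' + h = (1 + 2 / ε) * h := by rw [hc_def]; field_simp; ring
  calc wdist G w' u v ≤ ENNReal.ofReal c * hopDist G w h u v + h :=
        wdist_le_mul_hopDist_add hc hround h (ne_top_of_le_ne_top ENNReal.ofReal_ne_top hle)
    _ ≤ ENNReal.ofReal c * ENNReal.ofReal D' + ENNReal.ofReal h := by
        rw [ENNReal.ofReal_natCast]; gcongr
    _ = ENNReal.ofReal ((1 + 2 / ε) * h) := by
        rw [← ENNReal.ofReal_mul hc, ← ENNReal.ofReal_add (by positivity) (by positivity), hcD']

theorem stmt_3 {V : Type*} [Fintype V] (G : SimpleGraph V) (w : Sym2 V → ℝ)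
    (hw : ∀ e ∈ G.edgeSet, 0 < w e)
    (h : ℕ) (hh : 1 ≤ h) (ε D' : ℝ) (hε : 0 < ε) (hD' : 0 < D')
    (w' : Sym2 V → ℝ)
    (hw' : ∀ e ∈ G.edgeSet, w' e = ((⌈2 * (h : ℝ) * w e / (ε * D')⌉ : ℤ) : ℝ))
    (u v : V) (hle : hopDist G w h u v ≤ ENNReal.ofReal D') :
    wdist G w' u v ≤ ENNReal.ofReal ((1 + 2 / ε) * h) :=
  stmt_3_general G w h ε D' hε hD' w' hw' u v hle
end
end

section
/- Let (G,w) be a finite weighted graph with positive real edge weights, let h ≥ 1 be an integer, and let ε > 0 and D' > 0 be reals. Define rounded edge weights by w'(e) = ⌈2h·w(e)/(ε·D')⌉ for every edge e of G. If u and v are vertices with D'/2 ≤ dist^h_{G,w}(u,v) ≤ D', then (ε·D'/(2h))·dist_{G,w'}(u,v) ≤ (1+ε)·dist^h_{G,w}(u,v). -/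
open SimpleGraph
open scoped ENNReal

noncomputable section

/-
Rounding `w e` up to a multiple of `c = ε D' / (2h)` costs at most `c` per edge, so along a
walk with at most `h` edges the rounded weight, scaled back by `c`, exceeds the original weight
by at most `c h = ε D' / 2`. Since the `h`-hop distance is at least `D' / 2`, this additive
error is at most `ε` times the `h`-hop distance.
-/

lemma mul_ceil_div_le {x c : ℝ} (hc : 0 < c) : c * ⌈x / c⌉ ≤ x + c := by
  have := mul_le_mul_of_nonneg_left (Int.ceil_lt_add_one (x / c)).le hc.le
  rwa [mul_add, mul_div_cancel₀ _ hc.ne', mul_one] at this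

lemma walkWeight_le_add_mul_length {V : Type*} {G : SimpleGraph V} {w₁ w₂ : Sym2 V → ℝ} {c : ℝ}
    (hle : ∀ e ∈ G.edgeSet, w₁ e ≤ w₂ e + c) {u v : V} (p : G.Walk u v) :
    walkWeight w₁ p ≤ walkWeight w₂ p + c * p.length := by
  induction p with
  | nil => simp [walkWeight]
  | cons hadj q ih =>
    have he := hle _ ((mem_edgeSet _).mpr hadj)
    simp only [walkWeight, Walk.edges_cons, List.map_cons, List.sum_cons, Walk.length_cons,
      Nat.cast_succ] at ih ⊢
    linarith

lemma walkWeight_const_mul {V : Type*} {G : SimpleGraph V} (w : Sym2 V → ℝ) (c : ℝ) {u v : V}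
    (p : G.Walk u v) : walkWeight (fun e => c * w e) p = c * walkWeight w p := by
  simp only [walkWeight, List.sum_map_mul_left]

lemma ofReal_mul_wdist_le_hopDist_add {V : Type*} (G : SimpleGraph V) {w w' : Sym2 V → ℝ}
    {c : ℝ} (hc : 0 ≤ c) (hle : ∀ e ∈ G.edgeSet, c * w' e ≤ w e + c) (h : ℕ) (u v : V) :
    ENNReal.ofReal c * wdist G w' u v ≤ hopDist G w h u v + ENNReal.ofReal (c * h) := by
  rw [hopDist, ENNReal.iInf_add]
  refine le_iInf fun ⟨p, hp⟩ => ?_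
  have hweight : c * walkWeight w' p ≤ walkWeight w p + c * h := by
    have := walkWeight_le_add_mul_length (w₁ := fun e => c * w' e) hle p
    rw [walkWeight_const_mul] at this
    linarith [mul_le_mul_of_nonneg_left (Nat.cast_le.mpr hp : (p.length : ℝ) ≤ h) hc]
  calc ENNReal.ofReal c * wdist G w' u v
      ≤ ENNReal.ofReal c * ENNReal.ofReal (walkWeight w' p) := by gcongr; exact iInf_le _ p
    _ = ENNReal.ofReal (c * walkWeight w' p) := (ENNReal.ofReal_mul hc).symm
    _ ≤ ENNReal.ofReal (walkWeight w p + c * h) := ENNReal.ofReal_le_ofReal hweight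
    _ ≤ ENNReal.ofReal (walkWeight w p) + ENNReal.ofReal (c * h) := ENNReal.ofReal_add_le

theorem stmt_4_general {V : Type*} (G : SimpleGraph V) (w : Sym2 V → ℝ)
    (h : ℕ) (hh : 1 ≤ h) (ε D' : ℝ) (hε : 0 < ε) (hD' : 0 < D')
    (w' : Sym2 V → ℝ)
    (hw' : ∀ e ∈ G.edgeSet, w' e = ((⌈2 * (h : ℝ) * w e / (ε * D')⌉ : ℤ) : ℝ))
    (u v : V) (hlow : ENNReal.ofReal (D' / 2) ≤ hopDist G w h u v) :
    ENNReal.ofReal (ε * D' / (2 * h)) * wdist G w' u v ≤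
      ENNReal.ofReal (1 + ε) * hopDist G w h u v := by
  have hpos : (0 : ℝ) < h := by exact_mod_cast hh
  set c : ℝ := ε * D' / (2 * h) with hc_def
  have hc : 0 < c := by positivity
  have hle : ∀ e ∈ G.edgeSet, c * w' e ≤ w e + c := fun e he => by
    rw [hw' e he, show 2 * (h : ℝ) * w e / (ε * D') = w e / c by rw [hc_def]; field_simp]
    exact mul_ceil_div_le hc
  have hch : c * h = ε * (D' / 2) := by rw [hc_def]; field_simp
  calc ENNReal.ofReal c * wdist G w' u v
      ≤ hopDist G w h u v + ENNReal.ofReal (ε * (D' / 2)) := by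
        simpa only [hch] using ofReal_mul_wdist_le_hopDist_add G hc.le hle h u v
    _ ≤ hopDist G w h u v + ENNReal.ofReal ε * hopDist G w h u v := by
        rw [ENNReal.ofReal_mul hε.le]; gcongr
    _ = ENNReal.ofReal (1 + ε) * hopDist G w h u v := by
        rw [ENNReal.ofReal_add zero_le_one hε.le, ENNReal.ofReal_one, add_mul, one_mul]

theorem stmt_4 {V : Type*} [Fintype V] (G : SimpleGraph V) (w : Sym2 V → ℝ)
    (hw : ∀ e ∈ G.edgeSet, 0 < w e)
    (h : ℕ) (hh : 1 ≤ h) (ε D' : ℝ) (hε : 0 < ε) (hD' : 0 < D')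
    (w' : Sym2 V → ℝ)
    (hw' : ∀ e ∈ G.edgeSet, w' e = ((⌈2 * (h : ℝ) * w e / (ε * D')⌉ : ℤ) : ℝ))
    (u v : V) (hlow : ENNReal.ofReal (D' / 2) ≤ hopDist G w h u v)
    (hhigh : hopDist G w h u v ≤ ENNReal.ofReal D') :
    ENNReal.ofReal (ε * D' / (2 * h)) * wdist G w' u v ≤
      ENNReal.ofReal (1 + ε) * hopDist G w h u v :=
  stmt_4_general G w h hh ε D' hε hD' w' hw' u v hlow
end
end

section
/- Let (G,w) be a connected finite weighted graph on n vertices with positive real edge weights, let k be an integer with 1 ≤ k ≤ n−1, and for each vertex u let S(u) be a set of k nearest vertices to u. Let (G',w') be the k-shortcut graph of (G,w). Then dist_{G',w'}(u,v) = dist_{G,w}(u,v) for all vertices u,v, and for every pair of vertices u,v there is a u–v walk in G' whose w'-weight equals dist_{G',w'}(u,v) and which has fewer than 4n/k edges. -/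
open SimpleGraph
open scoped ENNReal

noncomputable section

/-!
Every edge of `G'` has `w'`-weight at least the `G`-distance of its ends, and every edge of `G`
has `w'`-weight at most its `w`-weight, so distances are unchanged.

For the hop bound take a minimum-weight `u`–`v` walk `q₀ q₁ … q_L` in `G'` with the fewest
edges; its segments are again such walks. Hence no shortcut edge joins `qᵢ` and `qⱼ` for
`|i - j| ≥ 2`, so by nearness every vertex of `S qᵢ` is at distance at most `d(qᵢ, qⱼ)` from `qᵢ`
for all those `j`. A common vertex of `S qᵢ` and `S qⱼ` with `j ≥ i + 4` would then make the two
shortcut edges through it a minimum-weight `qᵢ`–`qⱼ` walk with two edges. So every vertex lies in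
at most four of the `L + 1` sets `S qᵢ` of size `k`, and `(L + 1) k ≤ 4 n`.
-/

open Finset

section WeightedDistance

variable {V : Type*} {H H' : SimpleGraph V} {ω ω' : Sym2 V → ℝ} {u v x : V}

@[simp] lemma walkWeight_nil : walkWeight ω (Walk.nil : H.Walk u u) = 0 := by
  simp [walkWeight]

@[simp] lemma walkWeight_cons (h : H.Adj u v) (p : H.Walk v x) :
    walkWeight ω (Walk.cons h p) = ω s(u, v) + walkWeight ω p := by
  simp [walkWeight]

@[simp] lemma walkWeight_append (p : H.Walk u v) (q : H.Walk v x) :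
    walkWeight ω (p.append q) = walkWeight ω p + walkWeight ω q := by
  simp [walkWeight]

@[simp] lemma walkWeight_reverse (p : H.Walk u v) : walkWeight ω p.reverse = walkWeight ω p := by
  simp [walkWeight, List.sum_reverse]

@[simp] lemma walkWeight_copy {u' v' : V} (p : H.Walk u v) (hu : u = u') (hv : v = v') :
    walkWeight ω (p.copy hu hv) = walkWeight ω p := by
  subst hu hv
  rfl

lemma walkWeight_nonneg (hω : ∀ e ∈ H.edgeSet, 0 ≤ ω e) (p : H.Walk u v) :
    0 ≤ walkWeight ω p :=
  List.sum_nonneg <| by simpa using fun e he => hω e (p.edges_subset_edgeSet he)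

lemma walkWeight_bypass_le [DecidableEq V] (hω : ∀ e ∈ H.edgeSet, 0 ≤ ω e) (p : H.Walk u v) :
    walkWeight ω p.bypass ≤ walkWeight ω p :=
  (p.edges_bypass_sublist_edges.map ω).sum_le_sum <| by
    simpa using fun e he => hω e (p.edges_subset_edgeSet he)

lemma wdist_le_walkWeight_s6 (p : H.Walk u v) : wdist H ω u v ≤ ENNReal.ofReal (walkWeight ω p) :=
  iInf_le _ p

lemma wdist_le_of_adj (h : H.Adj u v) : wdist H ω u v ≤ ENNReal.ofReal (ω s(u, v)) := by
  simpa using wdist_le_walkWeight_s6 (ω := ω) (Walk.cons h Walk.nil)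

@[simp] lemma wdist_self : wdist H ω u u = 0 :=
  nonpos_iff_eq_zero.1 <| by simpa using wdist_le_walkWeight_s6 (ω := ω) (Walk.nil : H.Walk u u)

lemma wdist_comm (u v : V) : wdist H ω u v = wdist H ω v u := by
  have key : ∀ a b : V, wdist H ω a b ≤ wdist H ω b a := fun a b =>
    le_iInf fun p => by simpa using wdist_le_walkWeight_s6 (ω := ω) p.reverse
  exact (key u v).antisymm (key v u)

lemma wdist_triangle (u v x : V) : wdist H ω u x ≤ wdist H ω u v + wdist H ω v x := by
  conv_rhs => rw [wdist, wdist, ENNReal.iInf_add]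
  refine le_iInf fun p => ?_
  rw [ENNReal.add_iInf]
  refine le_iInf fun q => (wdist_le_walkWeight_s6 (p.append q)).trans ?_
  rw [walkWeight_append]
  exact ENNReal.ofReal_add_le

lemma wdist_ne_top (h : H.Reachable u v) : wdist H ω u v ≠ ⊤ :=
  let ⟨p⟩ := h
  ne_top_of_le_ne_top ENNReal.ofReal_ne_top (wdist_le_walkWeight_s6 p)

lemma wdist_le_wdist_of_le (hle : H ≤ H') (hω : ∀ a b, H.Adj a b → ω' s(a, b) ≤ ω s(a, b)) :
    wdist H' ω' u v ≤ wdist H ω u v := by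
  refine le_iInf fun p => (wdist_le_walkWeight_s6 (p.mapLe hle)).trans <| ENNReal.ofReal_le_ofReal ?_
  rw [walkWeight, walkWeight, Walk.edges_mapLe_eq_edges]
  refine List.sum_le_sum fun e he => ?_
  induction e using Sym2.ind with
  | h a b => exact hω a b (p.edges_subset_edgeSet he)

lemma wdist_le_wdist_of_adj (hω' : ∀ e ∈ H'.edgeSet, 0 ≤ ω' e)
    (h : ∀ a b, H'.Adj a b → wdist H ω a b ≤ ENNReal.ofReal (ω' s(a, b))) :
    wdist H ω u v ≤ wdist H' ω' u v := by
  refine le_iInf fun p => ?_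
  induction p with
  | nil => simp
  | @cons a b c hab q ih =>
    calc wdist H ω a c ≤ wdist H ω a b + wdist H ω b c := wdist_triangle a b c
      _ ≤ ENNReal.ofReal (ω' s(a, b)) + ENNReal.ofReal (walkWeight ω' q) :=
        add_le_add (h a b hab) ih
      _ = ENNReal.ofReal (walkWeight ω' (Walk.cons hab q)) := by
        rw [walkWeight_cons, ENNReal.ofReal_add (hω' _ hab) (walkWeight_nonneg hω' q)]

lemma exists_walkWeight_eq_wdist [Finite V] (hω : ∀ e ∈ H.edgeSet, 0 ≤ ω e)
    (h : H.Reachable u v) : ∃ p : H.Walk u v, ENNReal.ofReal (walkWeight ω p) = wdist H ω u v := by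
  classical
  cases nonempty_fintype V
  obtain ⟨p₀⟩ := h
  have : Nonempty {p : H.Walk u v // p.length < Fintype.card V} :=
    ⟨⟨p₀.bypass, p₀.bypass_isPath.length_lt⟩⟩
  obtain ⟨p, hp⟩ := Finite.exists_min
    fun p : {p : H.Walk u v // p.length < Fintype.card V} => ENNReal.ofReal (walkWeight ω p.1)
  refine ⟨p.1, le_antisymm (le_iInf fun q => ?_) (wdist_le_walkWeight_s6 _)⟩
  exact (hp ⟨q.bypass, q.bypass_isPath.length_lt⟩).trans
    (ENNReal.ofReal_le_ofReal (walkWeight_bypass_le hω q))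

lemma walkWeight_eq_wdist_of_append (hω : ∀ e ∈ H.edgeSet, 0 ≤ ω e) {p : H.Walk u v}
    {q : H.Walk v x} (h : ENNReal.ofReal (walkWeight ω (p.append q)) = wdist H ω u x) :
    ENNReal.ofReal (walkWeight ω p) = wdist H ω u v ∧
      ENNReal.ofReal (walkWeight ω q) = wdist H ω v x := by
  have hsplit : ENNReal.ofReal (walkWeight ω p) + ENNReal.ofReal (walkWeight ω q)
      = wdist H ω u x := by
    rw [← ENNReal.ofReal_add (walkWeight_nonneg hω p) (walkWeight_nonneg hω q),
      ← walkWeight_append, h]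
  have htri := hsplit.trans_le (wdist_triangle u v x)
  have hp := wdist_le_walkWeight_s6 (ω := ω) p
  have hq := wdist_le_walkWeight_s6 (ω := ω) q
  constructor
  · exact le_antisymm
      (ENNReal.le_of_add_le_add_right ENNReal.ofReal_ne_top (htri.trans (by gcongr))) hp
  · exact le_antisymm
      (ENNReal.le_of_add_le_add_left ENNReal.ofReal_ne_top (htri.trans (by gcongr))) hq

end WeightedDistance

namespace SimpleGraph.Walk

variable {V : Type*} {H : SimpleGraph V} {ω : Sym2 V → ℝ} {u v x : V}

structure IsMinHopGeodesic (ω : Sym2 V → ℝ) (p : H.Walk u v) : Prop where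
  weight_eq : ENNReal.ofReal (walkWeight ω p) = wdist H ω u v
  length_le : ∀ q : H.Walk u v,
    ENNReal.ofReal (walkWeight ω q) ≤ wdist H ω u v → p.length ≤ q.length

lemma exists_isMinHopGeodesic [Finite V] (hω : ∀ e ∈ H.edgeSet, 0 ≤ ω e)
    (h : H.Reachable u v) : ∃ p : H.Walk u v, p.IsMinHopGeodesic ω := by
  obtain ⟨p₀, hp₀⟩ := exists_walkWeight_eq_wdist hω h
  obtain ⟨p, hp, hmin⟩ := (InvImage.wf Walk.length wellFounded_lt).has_min
    {p : H.Walk u v | ENNReal.ofReal (walkWeight ω p) = wdist H ω u v} ⟨p₀, hp₀⟩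
  exact ⟨p, hp, fun q hq => not_lt.1 (hmin q (le_antisymm hq (wdist_le_walkWeight_s6 q)))⟩

@[simp] lemma isMinHopGeodesic_copy {u' v' : V} (p : H.Walk u v) (hu : u = u') (hv : v = v') :
    (p.copy hu hv).IsMinHopGeodesic ω ↔ p.IsMinHopGeodesic ω := by
  subst hu hv
  rfl

lemma IsMinHopGeodesic.of_append_left (hω : ∀ e ∈ H.edgeSet, 0 ≤ ω e) {p : H.Walk u v}
    {q : H.Walk v x} (h : (p.append q).IsMinHopGeodesic ω) : p.IsMinHopGeodesic ω := by
  obtain ⟨hp, hq⟩ := walkWeight_eq_wdist_of_append hω h.weight_eq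
  refine ⟨hp, fun p' hp' => ?_⟩
  have := h.length_le (p'.append q) <| by
    rw [walkWeight_append, ENNReal.ofReal_add (walkWeight_nonneg hω p') (walkWeight_nonneg hω q),
      ← h.weight_eq, walkWeight_append,
      ENNReal.ofReal_add (walkWeight_nonneg hω p) (walkWeight_nonneg hω q), hp]
    gcongr
  simpa using this

lemma IsMinHopGeodesic.of_append_right (hω : ∀ e ∈ H.edgeSet, 0 ≤ ω e) {p : H.Walk u v}
    {q : H.Walk v x} (h : (p.append q).IsMinHopGeodesic ω) : q.IsMinHopGeodesic ω := by
  obtain ⟨hp, hq⟩ := walkWeight_eq_wdist_of_append hω h.weight_eq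
  refine ⟨hq, fun q' hq' => ?_⟩
  have := h.length_le (p.append q') <| by
    rw [walkWeight_append, ENNReal.ofReal_add (walkWeight_nonneg hω p) (walkWeight_nonneg hω q'),
      ← h.weight_eq, walkWeight_append,
      ENNReal.ofReal_add (walkWeight_nonneg hω p) (walkWeight_nonneg hω q), hq]
    gcongr
  simpa using this

lemma IsMinHopGeodesic.take (hω : ∀ e ∈ H.edgeSet, 0 ≤ ω e) {p : H.Walk u v}
    (h : p.IsMinHopGeodesic ω) (n : ℕ) : (p.take n).IsMinHopGeodesic ω := by
  rw [← p.append_take_drop_eq n] at h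
  exact h.of_append_left hω

lemma IsMinHopGeodesic.drop (hω : ∀ e ∈ H.edgeSet, 0 ≤ ω e) {p : H.Walk u v}
    (h : p.IsMinHopGeodesic ω) (n : ℕ) : (p.drop n).IsMinHopGeodesic ω := by
  rw [← p.append_take_drop_eq n] at h
  exact h.of_append_right hω

lemma IsMinHopGeodesic.wdist_add_wdist (hω : ∀ e ∈ H.edgeSet, 0 ≤ ω e) {p : H.Walk u v}
    (h : p.IsMinHopGeodesic ω) (n : ℕ) :
    wdist H ω u (p.getVert n) + wdist H ω (p.getVert n) v = wdist H ω u v := by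
  rw [← p.append_take_drop_eq n] at h
  obtain ⟨h₁, h₂⟩ := walkWeight_eq_wdist_of_append hω h.weight_eq
  rw [← h₁, ← h₂, ← ENNReal.ofReal_add (walkWeight_nonneg hω _) (walkWeight_nonneg hω _),
    ← walkWeight_append, h.weight_eq]

lemma IsMinHopGeodesic.wdist_getVert_add (hω : ∀ e ∈ H.edgeSet, 0 ≤ ω e) {p : H.Walk u v}
    (h : p.IsMinHopGeodesic ω) {i j k : ℕ} (hij : i ≤ j) (hjk : j ≤ k) :
    wdist H ω (p.getVert i) (p.getVert j) + wdist H ω (p.getVert j) (p.getVert k)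
      = wdist H ω (p.getVert i) (p.getVert k) := by
  have := ((h.take hω k).drop hω i).wdist_add_wdist hω (j - i)
  simpa [Nat.add_sub_cancel' hij, min_eq_right (hij.trans hjk), min_eq_right hjk] using this

lemma IsMinHopGeodesic.exists_segment (hω : ∀ e ∈ H.edgeSet, 0 ≤ ω e) {p : H.Walk u v}
    (h : p.IsMinHopGeodesic ω) {i j : ℕ} (hij : i ≤ j) (hj : j ≤ p.length) :
    ∃ r : H.Walk (p.getVert i) (p.getVert j), r.IsMinHopGeodesic ω ∧ r.length = j - i :=
  ⟨((p.take j).drop i).copy (by simp [min_eq_right hij]) rfl,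
    by simpa using (h.take hω j).drop hω i, by simp [min_eq_left hj]⟩

lemma IsMinHopGeodesic.getVert_ne (hω : ∀ e ∈ H.edgeSet, 0 ≤ ω e) {p : H.Walk u v}
    (h : p.IsMinHopGeodesic ω) {i j : ℕ} (hij : i < j) (hj : j ≤ p.length) :
    p.getVert i ≠ p.getVert j := by
  intro heq
  obtain ⟨r, hr, hlen⟩ := h.exists_segment hω hij.le hj
  have := hr.length_le (Walk.nil.copy rfl heq) (by simp)
  rw [length_copy, length_nil] at this
  omega

end SimpleGraph.Walk

lemma Finset.card_le_of_forall_lt_add {A : Finset ℕ} {m : ℕ}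
    (h : ∀ i ∈ A, ∀ j ∈ A, i ≤ j → j < i + m) : #A ≤ m := by
  rcases A.eq_empty_or_nonempty with rfl | hA
  · simp
  calc #A ≤ #(Ico (A.min' hA) (A.min' hA + m)) :=
        card_le_card fun j hj =>
          mem_Ico.2 ⟨A.min'_le j hj, h _ (A.min'_mem hA) j hj (A.min'_le j hj)⟩
    _ = m := by simp

lemma Finset.sum_card_le_card_mul {ι α : Type*} [Fintype α] [DecidableEq α] (s : Finset ι)
    (f : ι → Finset α) {n : ℕ} (h : ∀ a, #{i ∈ s | a ∈ f i} ≤ n) :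
    ∑ i ∈ s, #(f i) ≤ Fintype.card α * n :=
  calc ∑ i ∈ s, #(f i) = ∑ i ∈ s, ∑ a, if a ∈ f i then 1 else 0 := by
        simp only [← card_filter, filter_univ_mem]
    _ = ∑ a, #{i ∈ s | a ∈ f i} := by simp only [card_filter]; exact sum_comm
    _ ≤ ∑ _a : α, n := sum_le_sum fun a _ => h a
    _ = Fintype.card α * n := by simp

structure IsShortcutGraph {V : Type*} (G : SimpleGraph V) (w : Sym2 V → ℝ) (S : V → Finset V)
    (G' : SimpleGraph V) (w' : Sym2 V → ℝ) : Prop where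
  adj_iff : ∀ a b : V, G'.Adj a b ↔ (G.Adj a b ∨ b ∈ S a ∨ a ∈ S b)
  weight_shortcut : ∀ a b : V, G'.Adj a b → (b ∈ S a ∨ a ∈ S b) →
    w' s(a, b) = (wdist G w a b).toReal
  weight_old : ∀ a b : V, G'.Adj a b → ¬(b ∈ S a ∨ a ∈ S b) → w' s(a, b) = w s(a, b)

namespace IsShortcutGraph

variable {V : Type*} {G G' : SimpleGraph V} {w w' : Sym2 V → ℝ} {S : V → Finset V} {a b : V}

lemma le (hS : IsShortcutGraph G w S G' w') : G ≤ G' :=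
  fun a b h => (hS.adj_iff a b).2 (Or.inl h)

lemma adj_of_mem (hS : IsShortcutGraph G w S G' w') (h : b ∈ S a ∨ a ∈ S b) : G'.Adj a b :=
  (hS.adj_iff a b).2 (Or.inr h)

lemma weight_nonneg (hS : IsShortcutGraph G w S G' w') (hw : ∀ e ∈ G.edgeSet, 0 ≤ w e) :
    ∀ e ∈ G'.edgeSet, 0 ≤ w' e := by
  intro e he
  induction e using Sym2.ind with
  | h a b =>
    by_cases hab : b ∈ S a ∨ a ∈ S b
    · rw [hS.weight_shortcut a b he hab]
      exact ENNReal.toReal_nonneg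
    · rw [hS.weight_old a b he hab]
      exact hw _ (((hS.adj_iff a b).1 he).resolve_right hab)

lemma wdist_eq (hS : IsShortcutGraph G w S G' w') (hw : ∀ e ∈ G.edgeSet, 0 ≤ w e)
    (hconn : G.Connected) (u v : V) : wdist G' w' u v = wdist G w u v := by
  refine le_antisymm (wdist_le_wdist_of_le hS.le fun a b hab => ?_)
    (wdist_le_wdist_of_adj (hS.weight_nonneg hw) fun a b hab => ?_)
  · by_cases hsc : b ∈ S a ∨ a ∈ S b
    · rw [hS.weight_shortcut a b (hS.le hab) hsc]
      exact ENNReal.toReal_le_of_le_ofReal (hw _ hab) (wdist_le_of_adj hab)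
    · rw [hS.weight_old a b (hS.le hab) hsc]
  · by_cases hsc : b ∈ S a ∨ a ∈ S b
    · rw [hS.weight_shortcut a b hab hsc,
        ENNReal.ofReal_toReal (wdist_ne_top (hconn.preconnected a b))]
    · rw [hS.weight_old a b hab hsc]
      exact wdist_le_of_adj (((hS.adj_iff a b).1 hab).resolve_right hsc)

lemma ofReal_weight_eq_wdist (hS : IsShortcutGraph G w S G' w') (hw : ∀ e ∈ G.edgeSet, 0 ≤ w e)
    (hconn : G.Connected) (h : b ∈ S a ∨ a ∈ S b) :
    ENNReal.ofReal (w' s(a, b)) = wdist G' w' a b := by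
  rw [hS.weight_shortcut a b (hS.adj_of_mem h) h,
    ENNReal.ofReal_toReal (wdist_ne_top (hconn.preconnected a b)), hS.wdist_eq hw hconn]

section MinHopGeodesic

variable {u v s : V} {Q : G'.Walk u v} {i j : ℕ}

lemma notMem_of_add_two_le (hS : IsShortcutGraph G w S G' w') (hw : ∀ e ∈ G.edgeSet, 0 ≤ w e)
    (hconn : G.Connected) (hQ : Q.IsMinHopGeodesic w') (hij : i + 2 ≤ j) (hj : j ≤ Q.length) :
    ¬(Q.getVert j ∈ S (Q.getVert i) ∨ Q.getVert i ∈ S (Q.getVert j)) := by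
  intro hmem
  obtain ⟨r, hr, hlen⟩ := hQ.exists_segment (hS.weight_nonneg hw) (by omega : i ≤ j) hj
  have := hr.length_le (Walk.cons (hS.adj_of_mem hmem) Walk.nil)
    (by simp [hS.ofReal_weight_eq_wdist hw hconn hmem])
  rw [Walk.length_cons, Walk.length_nil] at this
  omega

lemma wdist_le_wdist_getVert (hS : IsShortcutGraph G w S G' w') (hw : ∀ e ∈ G.edgeSet, 0 ≤ w e)
    (hconn : G.Connected)
    (hSnear : ∀ u, ∀ y ∈ S u, ∀ y', y' ∉ S u → y' ≠ u → wdist G w u y ≤ wdist G w u y')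
    (hQ : Q.IsMinHopGeodesic w') (hi : i ≤ Q.length) (hj : j ≤ Q.length)
    (hij : i + 2 ≤ j ∨ j + 2 ≤ i) (hs : s ∈ S (Q.getVert i)) :
    wdist G' w' (Q.getVert i) s ≤ wdist G' w' (Q.getVert i) (Q.getVert j) := by
  have hw' := hS.weight_nonneg hw
  rw [hS.wdist_eq hw hconn, hS.wdist_eq hw hconn]
  rcases hij with hij | hij
  · exact hSnear _ s hs _ (fun h => hS.notMem_of_add_two_le hw hconn hQ hij hj (Or.inl h))
      (hQ.getVert_ne hw' (by omega) hj).symm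
  · exact hSnear _ s hs _ (fun h => hS.notMem_of_add_two_le hw hconn hQ hij hi (Or.inr h))
      (hQ.getVert_ne hw' (by omega) hi)

/-- A common `s` is no farther from `Q.getVert i` and `Q.getVert j` than their neighbours two
steps inward, so the two shortcut edges through `s` form a minimum-weight walk with two edges. -/
lemma lt_add_four_of_mem (hS : IsShortcutGraph G w S G' w') (hw : ∀ e ∈ G.edgeSet, 0 ≤ w e)
    (hconn : G.Connected)
    (hSnear : ∀ u, ∀ y ∈ S u, ∀ y', y' ∉ S u → y' ≠ u → wdist G w u y ≤ wdist G w u y')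
    (hQ : Q.IsMinHopGeodesic w') (hij : i ≤ j) (hj : j ≤ Q.length)
    (hsi : s ∈ S (Q.getVert i)) (hsj : s ∈ S (Q.getVert j)) : j < i + 4 := by
  by_contra! h4
  have hw' := hS.weight_nonneg hw
  have hnear_i : wdist G' w' (Q.getVert i) s ≤ wdist G' w' (Q.getVert i) (Q.getVert (i + 2)) :=
    hS.wdist_le_wdist_getVert hw hconn hSnear hQ (by omega) (by omega) (by omega) hsi
  have hnear_j : wdist G' w' (Q.getVert j) s ≤ wdist G' w' (Q.getVert j) (Q.getVert (j - 2)) :=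
    hS.wdist_le_wdist_getVert hw hconn hSnear hQ hj (by omega) (by omega) hsj
  rw [wdist_comm, wdist_comm (Q.getVert j)] at hnear_j
  have hvia : wdist G' w' (Q.getVert i) s + wdist G' w' s (Q.getVert j)
      ≤ wdist G' w' (Q.getVert i) (Q.getVert j) :=
    calc _ ≤ wdist G' w' (Q.getVert i) (Q.getVert (i + 2))
          + wdist G' w' (Q.getVert (j - 2)) (Q.getVert j) := add_le_add hnear_i hnear_j
      _ ≤ wdist G' w' (Q.getVert i) (Q.getVert (i + 2))
          + (wdist G' w' (Q.getVert (i + 2)) (Q.getVert (j - 2))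
            + wdist G' w' (Q.getVert (j - 2)) (Q.getVert j)) := by gcongr; exact le_add_self
      _ = _ := by
        rw [hQ.wdist_getVert_add hw' (by omega) (by omega : j - 2 ≤ j),
          hQ.wdist_getVert_add hw' (by omega) (by omega : i + 2 ≤ j)]
  obtain ⟨r, hr, hlen⟩ := hQ.exists_segment hw' hij hj
  have := hr.length_le
    (Walk.cons (hS.adj_of_mem (Or.inl hsi)) (Walk.cons (hS.adj_of_mem (Or.inr hsj)) Walk.nil)) <| by
      rwa [walkWeight_cons, walkWeight_cons, walkWeight_nil, add_zero,
        ENNReal.ofReal_add (hw' _ (hS.adj_of_mem (Or.inl hsi)))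
          (hw' _ (hS.adj_of_mem (Or.inr hsj))),
        hS.ofReal_weight_eq_wdist hw hconn (Or.inl hsi),
        hS.ofReal_weight_eq_wdist hw hconn (Or.inr hsj)]
  rw [Walk.length_cons, Walk.length_cons, Walk.length_nil] at this
  omega

lemma length_mul_lt [Fintype V] {k : ℕ} (hS : IsShortcutGraph G w S G' w')
    (hw : ∀ e ∈ G.edgeSet, 0 ≤ w e) (hconn : G.Connected) (hk : 1 ≤ k)
    (hScard : ∀ u, #(S u) = k)
    (hSnear : ∀ u, ∀ y ∈ S u, ∀ y', y' ∉ S u → y' ≠ u → wdist G w u y ≤ wdist G w u y')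
    (hQ : Q.IsMinHopGeodesic w') : Q.length * k < 4 * Fintype.card V := by
  classical
  have hmult : ∀ s, #{i ∈ range (Q.length + 1) | s ∈ S (Q.getVert i)} ≤ 4 := fun s =>
    card_le_of_forall_lt_add fun i hi j hj hij => by
      simp only [mem_filter, mem_range] at hi hj
      exact hS.lt_add_four_of_mem hw hconn hSnear hQ hij (by omega) hi.2 hj.2
  have hcount : (Q.length + 1) * k ≤ Fintype.card V * 4 := by
    calc (Q.length + 1) * k = ∑ i ∈ range (Q.length + 1), #(S (Q.getVert i)) := by simp [hScard]
      _ ≤ Fintype.card V * 4 := sum_card_le_card_mul _ _ hmult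
  nlinarith

end MinHopGeodesic

end IsShortcutGraph

theorem stmt_6_general {V : Type*} [Fintype V] (G : SimpleGraph V) (w : Sym2 V → ℝ)
    (hw : ∀ e ∈ G.edgeSet, 0 < w e) (hconn : G.Connected)
    (k : ℕ) (hk1 : 1 ≤ k)
    -- `S u` is a set of `k` nearest vertices to `u`
    (S : V → Finset V)
    (hScard : ∀ u, (S u).card = k)
    (hSnear : ∀ u, ∀ y ∈ S u, ∀ y', y' ∉ S u → y' ≠ u →
      wdist G w u y ≤ wdist G w u y')
    -- `(G', w')` is the `k`-shortcut graph of `(G, w)`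
    (G' : SimpleGraph V)
    (hG' : ∀ a b : V, G'.Adj a b ↔ (G.Adj a b ∨ b ∈ S a ∨ a ∈ S b))
    (w' : Sym2 V → ℝ)
    (hw'short : ∀ a b : V, G'.Adj a b → (b ∈ S a ∨ a ∈ S b) →
      w' s(a, b) = (wdist G w a b).toReal)
    (hw'old : ∀ a b : V, G'.Adj a b → ¬(b ∈ S a ∨ a ∈ S b) →
      w' s(a, b) = w s(a, b)) :
    (∀ u v : V, wdist G' w' u v = wdist G w u v) ∧
    ∀ u v : V, ∃ p : G'.Walk u v,
      ENNReal.ofReal (walkWeight w' p) = wdist G' w' u v ∧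
      (p.length : ℝ) < 4 * (Fintype.card V) / k := by
  have hw₀ : ∀ e ∈ G.edgeSet, 0 ≤ w e := fun e he => (hw e he).le
  have hS : IsShortcutGraph G w S G' w' := ⟨hG', hw'short, hw'old⟩
  refine ⟨hS.wdist_eq hw₀ hconn, fun u v => ?_⟩
  obtain ⟨Q, hQ⟩ :=
    Walk.exists_isMinHopGeodesic (hS.weight_nonneg hw₀) ((hconn.mono hS.le).preconnected u v)
  refine ⟨Q, hQ.weight_eq, ?_⟩
  rw [lt_div_iff₀ (by exact_mod_cast hk1)]
  exact_mod_cast hS.length_mul_lt hw₀ hconn hk1 hScard hSnear hQ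

theorem stmt_6 {V : Type*} [Fintype V] (G : SimpleGraph V) (w : Sym2 V → ℝ)
    (hw : ∀ e ∈ G.edgeSet, 0 < w e) (hconn : G.Connected)
    (k : ℕ) (hk1 : 1 ≤ k) (hkn : k ≤ Fintype.card V - 1)
    -- `S u` is a set of `k` nearest vertices to `u`
    (S : V → Finset V)
    (hSnot : ∀ u, u ∉ S u) (hScard : ∀ u, (S u).card = k)
    (hSnear : ∀ u, ∀ y ∈ S u, ∀ y', y' ∉ S u → y' ≠ u →
      wdist G w u y ≤ wdist G w u y')
    -- `(G', w')` is the `k`-shortcut graph of `(G, w)`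
    (G' : SimpleGraph V)
    (hG' : ∀ a b : V, G'.Adj a b ↔ (G.Adj a b ∨ b ∈ S a ∨ a ∈ S b))
    (w' : Sym2 V → ℝ)
    (hw'short : ∀ a b : V, G'.Adj a b → (b ∈ S a ∨ a ∈ S b) →
      w' s(a, b) = (wdist G w a b).toReal)
    (hw'old : ∀ a b : V, G'.Adj a b → ¬(b ∈ S a ∨ a ∈ S b) →
      w' s(a, b) = w s(a, b)) :
    (∀ u v : V, wdist G' w' u v = wdist G w u v) ∧
    ∀ u v : V, ∃ p : G'.Walk u v,
      ENNReal.ofReal (walkWeight w' p) = wdist G' w' u v ∧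
      (p.length : ℝ) < 4 * (Fintype.card V) / k :=
  stmt_6_general G w hw hconn k hk1 S hScard hSnear G' hG' w' hw'short hw'old
end
end
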